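/- arXiv:1111.4799 — 4 statements merged into one kernel-verified Lean document; each statement's English description precedes it below -/
import Mathlib

section
/- Let z ∈ ℂ and let α and β be positive real numbers with αβ = 1. Then √α·(e^(−z²/8)/(2α) − e^(z²/8)·∑_{n=1}^∞ e^(−π·α²·n²)·cos(√π·α·n·z)) = √β·(e^(z²/8)/(2β) − e^(−z²/8)·∑_{n=1}^∞ e^(−π·β²·n²)·cosh(√π·β·n·z)). -/
open scoped Real
open MeasureTheory

/-- Rising factorial (Pochhammer symbol) `(a)_n`. -/
noncomputable def poch (a : ℂ) (n : ℕ) : ℂ := (ascPochhammer ℂ n).eval a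

/-- Confluent hypergeometric function `₁F₁(a;c;w)`. -/
noncomputable def oneF1 (a c w : ℂ) : ℂ :=
  ∑' n : ℕ, poch a n * w ^ n / (poch c n * n.factorial)

/-- The hypergeometric function `₂F₂(1,1;3/2,2;w)`. -/
noncomputable def twoF2 (w : ℂ) : ℂ :=
  ∑' n : ℕ, poch 1 n * poch 1 n * w ^ n / (poch (3/2) n * poch 2 n * n.factorial)

/-- The Riemann xi function `ξ(s) = (1/2) s (s-1) π^(-s/2) Γ(s/2) ζ(s)`. -/
noncomputable def xiR (s : ℂ) : ℂ :=
  (1 / 2) * s * (s - 1) * (π : ℂ) ^ (-s / 2) * Complex.Gamma (s / 2) * riemannZeta s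

/-- The Riemann Xi function `Ξ(t) = ξ(1/2 + i t)`. -/
noncomputable def XiR (t : ℂ) : ℂ := xiR (1 / 2 + Complex.I * t)

/-- `ρ(x,z,s) = x^(1/2-s) e^(-z²/8) ₁F₁((1-s)/2; 1/2; z²/4)`. -/
noncomputable def rhoF (x : ℝ) (z s : ℂ) : ℂ :=
  (x : ℂ) ^ ((1 : ℂ) / 2 - s) * Complex.exp (-z ^ 2 / 8) *
    oneF1 ((1 - s) / 2) (1 / 2) (z ^ 2 / 4)

/-- `∇(x,z,s) = ρ(x,z,s) + ρ(x,z,1-s)`. -/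
noncomputable def nablaF (x : ℝ) (z s : ℂ) : ℂ := rhoF x z s + rhoF x z (1 - s)

/-- The digamma function `ψ(x) = Γ'(x)/Γ(x)`. -/
noncomputable def digamma (x : ℝ) : ℝ := deriv Real.Gamma x / Real.Gamma x

/-- The modified Bessel function of order zero, `K₀(x) = ∫₀^∞ e^(-x cosh u) du`. -/
noncomputable def besselK0 (x : ℝ) : ℝ := ∫ u in Set.Ioi (0 : ℝ), Real.exp (-x * Real.cosh u)

/-
For `τ = iα²` and `w = αz/(2√π)` the cosine series `S(α, z)` of the left side is a Jacobi theta
value: `θ(w, τ) = 1 + 2 S(α, z)`. Since `-1/τ = iβ²` and `w/τ = -β(iz)/(2√π)`, Jacobi's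
transformation `θ(w, τ) = (-iτ)^{-1/2} e^{-πiw²/τ} θ(w/τ, -1/τ)` reads
`1 + 2 S(α, z) = β e^{-z²/4} (1 + 2 S(β, iz))`, and `cos(iu) = cosh u` turns `S(β, iz)` into the
cosh series of the right side. The identity is this relation multiplied by `√α e^{z²/8}/2`.
-/

section

open Complex

lemma jacobiTheta₂_term_add_term_neg (n : ℤ) (z τ : ℂ) :
    jacobiTheta₂_term n z τ + jacobiTheta₂_term (-n) z τ =
      2 * cexp (π * I * n ^ 2 * τ) * cos (2 * π * n * z) := by
  rw [mul_right_comm, two_cos, add_mul, jacobiTheta₂_term, jacobiTheta₂_term, ← Complex.exp_add,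
    ← Complex.exp_add]
  push_cast
  ring_nf

theorem jacobiTheta₂_eq_one_add_two_mul_tsum_cos (z : ℂ) {τ : ℂ} (hτ : 0 < τ.im) :
    jacobiTheta₂ z τ = 1 + 2 * ∑' n : ℕ,
      cexp (π * I * ((n : ℂ) + 1) ^ 2 * τ) * cos (2 * π * ((n : ℂ) + 1) * z) := by
  have h := (hasSum_jacobiTheta₂_term z hτ).nat_add_neg
  rw [← hasSum_nat_add_iff' 1] at h
  simp only [jacobiTheta₂_term_add_term_neg, Finset.sum_range_one] at h
  push_cast at h
  rw [← tsum_mul_left]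
  simp_rw [← mul_assoc]
  rw [h.tsum_eq]
  simp only [jacobiTheta₂_term, Int.cast_zero, mul_zero, zero_mul, ne_eq, OfNat.ofNat_ne_zero,
    not_false_eq_true, zero_pow, add_zero, exp_zero, mul_one, cos_zero]
  ring

noncomputable def thetaCosSeries (α : ℝ) (z : ℂ) : ℂ :=
  ∑' n : ℕ, cexp (-(π : ℂ) * α ^ 2 * (n + 1) ^ 2) * cos ((√π : ℂ) * α * (n + 1) * z)

lemma ofReal_sqrt_pi_sq : ((√π : ℝ) : ℂ) ^ 2 = π := by
  rw [← ofReal_pow, Real.sq_sqrt Real.pi_pos.le]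

lemma ofReal_sqrt_pi_ne_zero : ((√π : ℝ) : ℂ) ≠ 0 :=
  ofReal_ne_zero.mpr (Real.sqrt_pos.mpr Real.pi_pos).ne'

theorem jacobiTheta₂_eq_one_add_two_mul_thetaCosSeries {α : ℝ} (hα : α ≠ 0) (z : ℂ) :
    jacobiTheta₂ (α * z / (2 * √π)) (α ^ 2 * I) = 1 + 2 * thetaCosSeries α z := by
  have hτ : 0 < ((α : ℂ) ^ 2 * I).im := by
    rw [← ofReal_pow, im_ofReal_mul, I_im, mul_one]
    positivity
  have hsπ := ofReal_sqrt_pi_ne_zero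
  rw [jacobiTheta₂_eq_one_add_two_mul_tsum_cos _ hτ, thetaCosSeries]
  congr 3 with n
  congr 2
  · linear_combination (π : ℂ) * α ^ 2 * (n + 1) ^ 2 * I_sq
  · rw [← ofReal_sqrt_pi_sq]
    field_simp

theorem thetaCosSeries_functional_equation {α : ℝ} (hα : 0 < α) (z : ℂ) :
    1 + 2 * thetaCosSeries α z =
      α⁻¹ * cexp (-z ^ 2 / 4) * (1 + 2 * thetaCosSeries α⁻¹ (z * I)) := by
  have hαc : (α : ℂ) ≠ 0 := ofReal_ne_zero.mpr hα.ne'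
  have hsπ := ofReal_sqrt_pi_ne_zero
  have hsqrt : (-I * (α ^ 2 * I)) ^ (1 / 2 : ℂ) = α := by
    have h : -I * (α ^ 2 * I) = ((α ^ 2 : ℝ) : ℂ) := by
      push_cast
      linear_combination (-(α : ℂ) ^ 2) * I_sq
    rw [h, show (1 / 2 : ℂ) = ((1 / 2 : ℝ) : ℂ) by norm_num, ← ofReal_cpow (by positivity),
      ← Real.sqrt_eq_rpow, Real.sqrt_sq hα.le]
  have hw : α * z / (2 * √π) / (α ^ 2 * I) = -(((α⁻¹ : ℝ) : ℂ) * (z * I) / (2 * √π)) := by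
    push_cast
    field_simp
    linear_combination z * I_sq
  have hτ : -1 / ((α : ℂ) ^ 2 * I) = ((α⁻¹ : ℝ) : ℂ) ^ 2 * I := by
    push_cast
    field_simp
    linear_combination -I_sq
  have hexp : -π * I * (α * z / (2 * √π)) ^ 2 / (α ^ 2 * I) = -z ^ 2 / 4 := by
    rw [div_pow, mul_pow 2, ofReal_sqrt_pi_sq]
    field_simp
    ring
  rw [← jacobiTheta₂_eq_one_add_two_mul_thetaCosSeries hα.ne',
    ← jacobiTheta₂_eq_one_add_two_mul_thetaCosSeries (inv_ne_zero hα.ne'),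
    jacobiTheta₂_functional_equation, hsqrt, hw, hτ, hexp, jacobiTheta₂_neg_left, one_div,
    ofReal_inv]

lemma tsum_cosh_eq_thetaCosSeries (β : ℝ) (z : ℂ) :
    ∑' n : ℕ, cexp (-(π : ℂ) * β ^ 2 * (n + 1) ^ 2) * cosh ((√π : ℂ) * β * (n + 1) * z) =
      thetaCosSeries β (z * I) := by
  simp only [thetaCosSeries, ← mul_assoc, cos_mul_I]

theorem sqrt_mul_sub_thetaCosSeries_eq {α : ℝ} (hα : 0 < α) (z : ℂ) :
    (√α : ℂ) * (cexp (-z ^ 2 / 8) / (2 * α) - cexp (z ^ 2 / 8) * thetaCosSeries α z) =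
      (√α⁻¹ : ℂ) *
        (cexp (z ^ 2 / 8) / (2 * α⁻¹) - cexp (-z ^ 2 / 8) * thetaCosSeries α⁻¹ (z * I)) := by
  have hFE := thetaCosSeries_functional_equation hα z
  rw [Real.sqrt_inv]
  have hF : cexp (-z ^ 2 / 4) = cexp (-z ^ 2 / 8) ^ 2 := by
    rw [← Complex.exp_nat_mul]; ring_nf
  have hEF : cexp (z ^ 2 / 8) * cexp (-z ^ 2 / 8) = 1 := by
    rw [← Complex.exp_add, neg_div, add_neg_cancel, Complex.exp_zero]
  have hs : (α : ℂ) = (√α : ℂ) ^ 2 := by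
    rw [← ofReal_pow, Real.sq_sqrt hα.le]
  have hs0 : (√α : ℂ) ≠ 0 := ofReal_ne_zero.mpr (Real.sqrt_pos.mpr hα).ne'
  rw [hF, ofReal_inv, hs] at hFE
  push_cast
  rw [hs]
  set E := cexp (z ^ 2 / 8)
  set F := cexp (-z ^ 2 / 8)
  set Sβ := thetaCosSeries α⁻¹ (z * I)
  field_simp at hFE ⊢
  linear_combination (-E) * hFE - F * (1 + 2 * Sβ) * hEF

end

theorem stmt2_general (z : ℂ) (α β : ℝ) (hα : 0 < α) (hαβ : α * β = 1) :
    (Real.sqrt α : ℂ) * (Complex.exp (-z ^ 2 / 8) / (2 * α) -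
      Complex.exp (z ^ 2 / 8) * ∑' n : ℕ,
        Complex.exp (-(π : ℂ) * α ^ 2 * (n + 1) ^ 2) *
          Complex.cos ((Real.sqrt π : ℂ) * α * (n + 1) * z)) =
    (Real.sqrt β : ℂ) * (Complex.exp (z ^ 2 / 8) / (2 * β) -
      Complex.exp (-z ^ 2 / 8) * ∑' n : ℕ,
        Complex.exp (-(π : ℂ) * β ^ 2 * (n + 1) ^ 2) *
          Complex.cosh ((Real.sqrt π : ℂ) * β * (n + 1) * z)) := by
  obtain rfl : β = α⁻¹ := eq_inv_of_mul_eq_one_right hαβ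
  rw [tsum_cosh_eq_thetaCosSeries]
  exact sqrt_mul_sub_thetaCosSeries_eq hα z

theorem stmt2 (z : ℂ) (α β : ℝ) (hα : 0 < α) (hβ : 0 < β) (hαβ : α * β = 1) :
    (Real.sqrt α : ℂ) * (Complex.exp (-z ^ 2 / 8) / (2 * α) -
      Complex.exp (z ^ 2 / 8) * ∑' n : ℕ,
        Complex.exp (-(π : ℂ) * α ^ 2 * (n + 1) ^ 2) *
          Complex.cos ((Real.sqrt π : ℂ) * α * (n + 1) * z)) =
    (Real.sqrt β : ℂ) * (Complex.exp (z ^ 2 / 8) / (2 * β) -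
      Complex.exp (-z ^ 2 / 8) * ∑' n : ℕ,
        Complex.exp (-(π : ℂ) * β ^ 2 * (n + 1) ^ 2) *
          Complex.cosh ((Real.sqrt π : ℂ) * β * (n + 1) * z)) :=
  stmt2_general z α β hα hαβ
end

section
/- Let α and β be positive real numbers with αβ = 1, and let z ∈ ℂ and s ∈ ℂ. Then ∇(β, i·z, s) = ∇(α, z, s). -/
open scoped Real
open MeasureTheory

/-!
Kummer's transformation `₁F₁(a; c; w) = e^w ₁F₁(c - a; c; -w)`, taken at `c = 1/2` and
`w = -z²/4`, turns `ρ(1/x, iz, s)` into `ρ(x, z, 1 - s)`: the two summands of `∇` are swapped.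
Kummer's transformation itself comes from the Cauchy product of `e^w` with `₁F₁(b; c; -w)`,
whose `n`-th coefficient is summed by the Chu–Vandermonde identity.
-/

open Finset Filter Topology Polynomial

section ChuVandermonde

variable {R : Type*} [CommRing R]

theorem ascPochhammer_eval_add (x : R) (m n : ℕ) :
    (ascPochhammer R (m + n)).eval x =
      (ascPochhammer R m).eval x * (ascPochhammer R n).eval (x + m) := by
  simp [← ascPochhammer_mul, eval_comp]

theorem ascPochhammer_succ_eval_left (x : R) (n : ℕ) :
    (ascPochhammer R (n + 1)).eval x = x * (ascPochhammer R n).eval (x + 1) := by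
  simp [ascPochhammer_succ_left, eval_comp]

/-- Chu–Vandermonde: `₂F₁(-n, b; c; 1) = (c - b)ₙ / (c)ₙ`, cleared of denominators. -/
theorem ascPochhammer_eval_sub_eq_sum (b c : R) (n : ℕ) :
    (ascPochhammer R n).eval (c - b) = ∑ ij ∈ antidiagonal n, (n.choose ij.1 : R) *
      ((-1) ^ ij.1 * (ascPochhammer R ij.1).eval b * (ascPochhammer R ij.2).eval (c + ij.1)) := by
  induction n generalizing c with
  | zero => simp
  | succ n ih =>
    rw [sum_antidiagonal_choose_succ_mul fun i j =>
        (-1) ^ i * (ascPochhammer R i).eval b * (ascPochhammer R j).eval (c + i),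
      ← sum_add_distrib, ascPochhammer_succ_eval_left,
      show c - b + 1 = c + 1 - b by ring, ih, mul_sum]
    refine sum_congr rfl fun ij hij => ?_
    rw [Nat.choose_symm_of_eq_add (mem_antidiagonal.mp hij).symm, ← mul_add,
      ascPochhammer_succ_eval_left, ascPochhammer_succ_eval]
    push_cast
    ring_nf

end ChuVandermonde

theorem sum_choose_mul_ascPochhammer_div {K : Type*} [Field K] (b c : K) (n : ℕ)
    (hc : (ascPochhammer K n).eval c ≠ 0) :
    ∑ ij ∈ antidiagonal n, (n.choose ij.1 : K) *
      ((-1) ^ ij.1 * (ascPochhammer K ij.1).eval b / (ascPochhammer K ij.1).eval c) =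
      (ascPochhammer K n).eval (c - b) / (ascPochhammer K n).eval c := by
  rw [ascPochhammer_eval_sub_eq_sum, sum_div]
  refine sum_congr rfl fun ij hij => ?_
  rw [← mem_antidiagonal.mp hij, ascPochhammer_eval_add] at hc ⊢
  obtain ⟨hc₁, hc₂⟩ := mul_ne_zero_iff.mp hc
  field_simp

theorem tendsto_inv_const_add_natCast {𝕜 : Type*} [RCLike 𝕜] (c : 𝕜) :
    Tendsto (fun n : ℕ => (c + n)⁻¹) atTop (𝓝 0) :=
  tendsto_inv₀_cobounded.comp <|
    (tendsto_const_add_cobounded c).comp tendsto_natCast_atTop_cobounded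

noncomputable def oneF1Term (a c w : ℂ) (n : ℕ) : ℂ :=
  poch a n * w ^ n / (poch c n * n.factorial)

section ConfluentHypergeometric

variable {c : ℂ}

theorem poch_ne_zero (hc : ∀ n : ℕ, (n : ℂ) ≠ -c) (n : ℕ) : poch c n ≠ 0 := by
  simpa [poch] using fun k _ => hc k

theorem oneF1Term_succ (hc : ∀ n : ℕ, (n : ℂ) ≠ -c) (a w : ℂ) (n : ℕ) :
    oneF1Term a c w (n + 1) = oneF1Term a c w n * ((a + n) * w / ((c + n) * (n + 1))) := by
  have hcn : c + n ≠ 0 := fun h => hc n (eq_neg_of_add_eq_zero_right h)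
  have := poch_ne_zero hc n
  simp only [oneF1Term, poch, ascPochhammer_succ_eval, Nat.factorial_succ, pow_succ]
  push_cast
  field_simp

theorem summable_norm_oneF1Term (hc : ∀ n : ℕ, (n : ℂ) ≠ -c) (a w : ℂ) :
    Summable fun n => ‖oneF1Term a c w n‖ := by
  have hratio :
      Tendsto (fun n : ℕ => ‖(a + n) * w / ((c + n) * (n + 1))‖) atTop (𝓝 0) := by
    have h : Tendsto (fun n : ℕ => (1 + (a - c) * (c + n)⁻¹) * w * (1 + (n : ℂ))⁻¹) atTop
        (𝓝 ((1 + (a - c) * 0) * w * 0)) :=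
      ((tendsto_const_nhds.add (tendsto_const_nhds.mul (tendsto_inv_const_add_natCast c))).mul_const
        w).mul (tendsto_inv_const_add_natCast 1)
    rw [mul_zero] at h
    rw [← norm_zero (E := ℂ)]
    refine (h.congr fun n => ?_).norm
    have hcn : c + n ≠ 0 := fun h => hc n (eq_neg_of_add_eq_zero_right h)
    have hn : (1 : ℂ) + n ≠ 0 := by norm_cast; omega
    field_simp
    ring
  refine summable_of_ratio_norm_eventually_le (by norm_num : (1 / 2 : ℝ) < 1) ?_
  filter_upwards [hratio.eventually_lt_const (by norm_num : (0 : ℝ) < 1 / 2)] with n hn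
  rw [norm_norm, norm_norm, oneF1Term_succ hc, norm_mul, mul_comm]
  gcongr

/-- Kummer's transformation. -/
theorem oneF1_sub_eq_exp_mul (hc : ∀ n : ℕ, (n : ℂ) ≠ -c) (b w : ℂ) :
    oneF1 (c - b) c w = Complex.exp w * oneF1 b c (-w) := by
  have hcauchy : oneF1 b c (-w) * Complex.exp w = ∑' n, ∑ ij ∈ antidiagonal n,
      oneF1Term b c (-w) ij.1 * (w ^ ij.2 / ij.2.factorial) := by
    rw [Complex.exp_eq_exp_ℂ, NormedSpace.exp_eq_tsum_div]
    exact tsum_mul_tsum_eq_tsum_sum_antidiagonal_of_summable_norm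
      (summable_norm_oneF1Term hc b (-w)) (NormedSpace.norm_expSeries_div_summable w)
  rw [mul_comm, hcauchy]
  refine tsum_congr fun n => Eq.symm ?_
  calc ∑ ij ∈ antidiagonal n, oneF1Term b c (-w) ij.1 * (w ^ ij.2 / ij.2.factorial)
      = w ^ n / n.factorial * ∑ ij ∈ antidiagonal n,
          (n.choose ij.1 : ℂ) * ((-1) ^ ij.1 * poch b ij.1 / poch c ij.1) := by
        rw [mul_sum]
        refine sum_congr rfl fun ⟨i, j⟩ hij => ?_
        obtain rfl := mem_antidiagonal.mp hij
        have hfact : ((i + j).choose i : ℂ) * i.factorial * j.factorial = (i + j).factorial := by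
          rw [Nat.choose_symm_add]
          exact_mod_cast Nat.add_choose_mul_factorial_mul_factorial i j
        have : ((i + j).choose i : ℂ) ≠ 0 := by exact_mod_cast (Nat.choose_pos (by omega)).ne'
        have := poch_ne_zero hc i
        simp only [oneF1Term, neg_pow w, ← hfact]
        field_simp
        ring
    _ = oneF1Term (c - b) c w n := by
        simp only [oneF1Term, poch]
        rw [sum_choose_mul_ascPochhammer_div b c n (poch_ne_zero hc n)]
        ring

end ConfluentHypergeometric

theorem natCast_ne_neg_half (n : ℕ) : (n : ℂ) ≠ -(1 / 2) := by
  intro h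
  have := congrArg Complex.re h
  norm_num at this
  linarith [(n.cast_nonneg : (0 : ℝ) ≤ n)]

theorem rhoF_inv_I_mul {x : ℝ} (hx : 0 ≤ x) (z s : ℂ) :
    rhoF x⁻¹ (Complex.I * z) s = rhoF x z (1 - s) := by
  have hkummer := oneF1_sub_eq_exp_mul natCast_ne_neg_half (s / 2) (-z ^ 2 / 4)
  have hpow :
      ((x⁻¹ : ℝ) : ℂ) ^ ((1 : ℂ) / 2 - s) = (x : ℂ) ^ ((1 : ℂ) / 2 - (1 - s)) := by
    rw [Complex.ofReal_inv, Complex.inv_cpow_ofReal_nonneg hx, ← Complex.cpow_neg]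
    congr 1
    ring
  rw [show (1 / 2 : ℂ) - s / 2 = (1 - s) / 2 by ring, neg_div, neg_neg] at hkummer
  have hexp :
      Complex.exp (z ^ 2 / 8) * Complex.exp (-(z ^ 2 / 4)) = Complex.exp (-(z ^ 2 / 8)) := by
    rw [← Complex.exp_add]
    congr 1
    ring
  simp only [rhoF, hpow, mul_pow, Complex.I_sq, neg_one_mul, neg_div, neg_neg, hkummer, ← hexp,
    show (1 - (1 - s)) / 2 = s / 2 by ring]
  ring

theorem nablaF_inv_I_mul {x : ℝ} (hx : 0 ≤ x) (z s : ℂ) :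
    nablaF x⁻¹ (Complex.I * z) s = nablaF x z s := by
  rw [nablaF, nablaF, rhoF_inv_I_mul hx, rhoF_inv_I_mul hx, sub_sub_cancel, add_comm]

theorem stmt11_general (α β : ℝ) (hα : 0 < α) (hαβ : α * β = 1) (z s : ℂ) :
    nablaF β (Complex.I * z) s = nablaF α z s := by
  rw [eq_inv_of_mul_eq_one_right hαβ, nablaF_inv_I_mul hα.le]

theorem stmt11 (α β : ℝ) (hα : 0 < α) (hβ : 0 < β) (hαβ : α * β = 1) (z s : ℂ) :
    nablaF β (Complex.I * z) s = nablaF α z s :=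
  stmt11_general α β hα hαβ z s
end

section
/- For every w ∈ ℂ, ∑_{n=0}^∞ ((−w)ⁿ/n!)·(∑_{j=1}^n 1/(2j−1)) = −w·e^(−w)·₂F₂(1,1;3/2,2;w), where the inner sum over j is empty (equal to 0) when n = 0. -/
open scoped Real
open MeasureTheory

/-!
Expanding the Pochhammer symbols, `₂F₂(1,1;3/2,2;w) = ∑ wⁿ / ((3/2)ₙ (n+1))`. Let `cₙ` be the
Taylor coefficients of `e^{-w} ₂F₂(1,1;3/2,2;w)` and `dₙ` those of `e^{-w} ₁F₁(1;3/2;w)`.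
Differentiating `e^{-w} · ∑ bₗ wˡ` coefficientwise gives `(2n+3) d_{n+1} = (-1)^{n+1}/(n+1)!`
and `(n+2) c_{n+1} = -cₙ + d_{n+1}`, so by induction `cₙ = (-1)ⁿ H_{n+1}/(n+1)!` with
`Hₙ = ∑_{j<n} 1/(2j+1)`; hence the `(n+1)`-st term of the left-hand side is `-w · cₙ wⁿ`.
-/

open Finset Nat

section

variable {K : Type*} [Field K]

/-- The `N`-th Taylor coefficient of `e^{-w} ∑ₗ b l wˡ`. -/
def negExpConv (b : ℕ → K) (N : ℕ) : K := ∑ x ∈ antidiagonal N, (-1) ^ x.1 / x.1 ! * b x.2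

-- The coefficient form of `(e^{-w})' = -e^{-w}`.
theorem sum_antidiagonal_succ_fst_mul [CharZero K] (b : ℕ → K) (N : ℕ) :
    ∑ x ∈ antidiagonal (N + 1), (x.1 : K) * ((-1) ^ x.1 / x.1 ! * b x.2) = -negExpConv b N := by
  rw [Nat.sum_antidiagonal_succ, negExpConv, ← sum_neg_distrib]
  simp only [Nat.cast_zero, zero_mul, zero_add]
  refine sum_congr rfl fun x _ => ?_
  rw [Nat.factorial_succ, pow_succ]
  push_cast
  field_simp

noncomputable def pochThreeHalves (n : ℕ) : K := (ascPochhammer K n).eval (3 / 2)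

theorem pochThreeHalves_succ (n : ℕ) :
    (pochThreeHalves (n + 1) : K) = pochThreeHalves n * (3 / 2 + n) :=
  ascPochhammer_succ_eval n _

theorem three_add_two_mul_natCast_ne_zero [CharZero K] (n : ℕ) : (3 + 2 * n : K) ≠ 0 := by
  exact_mod_cast (by omega : 3 + 2 * n ≠ 0)

theorem pochThreeHalves_ne_zero [CharZero K] (n : ℕ) : (pochThreeHalves n : K) ≠ 0 := by
  induction n with
  | zero => simp [pochThreeHalves]
  | succ n ih =>
    have := three_add_two_mul_natCast_ne_zero (K := K) n
    rw [pochThreeHalves_succ]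
    refine mul_ne_zero ih fun h => this ?_
    linear_combination 2 * h

def oddHarmonic (n : ℕ) : K := ∑ j ∈ range n, 1 / (2 * ((j : K) + 1) - 1)

-- Kummer's transformation `e^{-w} ₁F₁(1;3/2;w) = ₁F₁(1/2;3/2;-w)`, coefficientwise.
theorem negExpConv_inv_pochThreeHalves [CharZero K] (N : ℕ) :
    negExpConv (fun l => (pochThreeHalves l : K)⁻¹) N = (-1) ^ N / ((2 * N + 1) * N !) := by
  cases N with
  | zero => simp [negExpConv, pochThreeHalves]
  | succ N =>
    -- `(2l + 3) / (3/2)_{l+1} = 2 / (3/2)_l`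
    have hodd : ∑ x ∈ antidiagonal (N + 1),
        (2 * (x.2 : K) + 1) * ((-1) ^ x.1 / x.1 ! * (pochThreeHalves x.2)⁻¹)
        = (-1) ^ (N + 1) / (N + 1)! + 2 * negExpConv (fun l => (pochThreeHalves l : K)⁻¹) N := by
      rw [Nat.sum_antidiagonal_succ', negExpConv, mul_sum]
      congr 1
      · simp [pochThreeHalves]
      refine sum_congr rfl fun x _ => ?_
      have := pochThreeHalves_ne_zero (K := K) x.2
      have := three_add_two_mul_natCast_ne_zero (K := K) x.2
      rw [pochThreeHalves_succ]
      push_cast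
      field_simp
      ring
    have key : (2 * (N + 1 : K) + 1) * negExpConv (fun l => (pochThreeHalves l : K)⁻¹) (N + 1)
        = (-1) ^ (N + 1) / (N + 1)! := by
      rw [← add_neg_cancel_right ((-1) ^ (N + 1) / ((N + 1)! : K))
        (2 * negExpConv (fun l => (pochThreeHalves l : K)⁻¹) N), ← hodd, ← mul_neg,
        ← sum_antidiagonal_succ_fst_mul, mul_sum, ← sum_add_distrib, negExpConv, mul_sum]
      refine sum_congr rfl fun x hx => ?_
      have hx : (x.1 : K) + x.2 = N + 1 := by exact_mod_cast mem_antidiagonal.mp hx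
      linear_combination (-2 * ((-1) ^ x.1 / x.1 ! * (pochThreeHalves x.2 : K)⁻¹)) * hx
    have hN : 2 * (N + 1 : K) + 1 ≠ 0 := by
      convert three_add_two_mul_natCast_ne_zero (K := K) N using 1; ring
    rw [eq_div_of_mul_eq hN ((mul_comm _ _).trans key), div_div, mul_comm]
    push_cast
    ring

theorem negExpConv_inv_pochThreeHalves_mul_succ [CharZero K] (N : ℕ) :
    negExpConv (fun l => (pochThreeHalves l * (l + 1) : K)⁻¹) N
      = (-1) ^ N * oddHarmonic (N + 1) / (N + 1)! := by
  induction N with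
  | zero => simp [negExpConv, pochThreeHalves, oddHarmonic]; norm_num
  | succ N ih =>
    -- `(l + 1) / ((3/2)_l (l + 1)) = 1 / (3/2)_l`: the derivative of `w ₂F₂` is `₁F₁(1;3/2;w)`
    have key : (N + 2 : K) * negExpConv (fun l => (pochThreeHalves l * (l + 1) : K)⁻¹) (N + 1)
        = -negExpConv (fun l => (pochThreeHalves l * (l + 1) : K)⁻¹) N
          + negExpConv (fun l => (pochThreeHalves l : K)⁻¹) (N + 1) := by
      rw [← sum_antidiagonal_succ_fst_mul, negExpConv, negExpConv, mul_sum, ← sum_add_distrib]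
      refine sum_congr rfl fun x hx => ?_
      have hx : (x.1 : K) + x.2 = N + 1 := by exact_mod_cast mem_antidiagonal.mp hx
      have := pochThreeHalves_ne_zero (K := K) x.2
      have : (x.2 + 1 : K) ≠ 0 := Nat.cast_add_one_ne_zero x.2
      have : (x.1 ! : K) ≠ 0 := Nat.cast_ne_zero.mpr x.1.factorial_ne_zero
      field_simp
      linear_combination -hx
    have hN : (N + 2 : K) ≠ 0 := by exact_mod_cast (by omega : N + 2 ≠ 0)
    have hodd : oddHarmonic (N + 2) = oddHarmonic (N + 1) + (2 * (N + 1 : K) + 1)⁻¹ := by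
      rw [oddHarmonic, sum_range_succ, ← oddHarmonic]
      push_cast
      ring
    rw [ih, negExpConv_inv_pochThreeHalves] at key
    rw [eq_div_of_mul_eq hN ((mul_comm _ _).trans key), hodd]
    have : ((N + 1)! : K) ≠ 0 := Nat.cast_ne_zero.mpr (N + 1).factorial_ne_zero
    have := three_add_two_mul_natCast_ne_zero (K := K) N
    rw [Nat.factorial_succ (N + 1)]
    push_cast
    rw [show 2 * ((N : K) + 1) + 1 = 3 + 2 * N by ring, show (N : K) + 1 + 1 = N + 2 by ring]
    field_simp
    ring

end

theorem poch_one (n : ℕ) : poch 1 n = n ! := ascPochhammer_eval_one ℂ n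

theorem poch_two (n : ℕ) : poch 2 n = (n + 1)! := by
  simpa [poch, add_comm, one_add_one_eq_two] using factorial_mul_ascPochhammer ℂ 1 n

theorem twoF2_eq_tsum (w : ℂ) :
    twoF2 w = ∑' n : ℕ, ((pochThreeHalves n : ℂ) * (n + 1))⁻¹ * w ^ n := by
  refine tsum_congr fun n => ?_
  have : (pochThreeHalves n : ℂ) ≠ 0 := pochThreeHalves_ne_zero n
  have : (n ! : ℂ) ≠ 0 := Nat.cast_ne_zero.mpr n.factorial_ne_zero
  rw [poch_one, poch_two, Nat.factorial_succ, show poch (3 / 2) n = pochThreeHalves n from rfl]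
  push_cast
  field_simp

theorem factorial_le_norm_pochThreeHalves (n : ℕ) : (n ! : ℝ) ≤ ‖(pochThreeHalves n : ℂ)‖ := by
  induction n with
  | zero => simp [pochThreeHalves]
  | succ n ih =>
    have h : ‖(3 / 2 + n : ℂ)‖ = 3 / 2 + n := by
      rw [show (3 / 2 + n : ℂ) = ((3 / 2 + n : ℝ) : ℂ) by push_cast; rfl]
      exact Complex.norm_of_nonneg (by positivity)
    rw [pochThreeHalves_succ, norm_mul, h, Nat.factorial_succ, Nat.cast_mul, mul_comm]
    gcongr
    push_cast
    linarith

theorem summable_norm_inv_pochThreeHalves_mul_pow (w : ℂ) :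
    Summable fun n : ℕ => ‖(pochThreeHalves n * (n + 1) : ℂ)⁻¹ * w ^ n‖ := by
  refine (Real.summable_pow_div_factorial ‖w‖).of_nonneg_of_le (fun _ => norm_nonneg _) fun n => ?_
  have hn : (1 : ℝ) ≤ ‖(n + 1 : ℂ)‖ := by exact_mod_cast (by omega : 1 ≤ n + 1)
  rw [norm_mul, norm_inv, norm_mul, norm_pow, inv_mul_eq_div]
  gcongr
  exact (factorial_le_norm_pochThreeHalves n).trans (le_mul_of_one_le_right (norm_nonneg _) hn)

theorem hasSum_negExpConv_mul_pow (b : ℕ → ℂ) (w : ℂ) (hb : Summable fun n => ‖b n * w ^ n‖) :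
    HasSum (fun N => negExpConv b N * w ^ N) (Complex.exp (-w) * ∑' n, b n * w ^ n) := by
  have he := NormedSpace.norm_expSeries_div_summable (-w)
  have hC : HasSum (fun N => ∑ x ∈ antidiagonal N, (-w) ^ x.1 / x.1 ! * (b x.2 * w ^ x.2))
      (Complex.exp (-w) * ∑' n, b n * w ^ n) := by
    rw [Complex.exp_eq_exp_ℂ, ← (NormedSpace.expSeries_div_hasSum_exp (-w)).tsum_eq,
      tsum_mul_tsum_eq_tsum_sum_antidiagonal_of_summable_norm he hb]
    exact (summable_norm_sum_mul_antidiagonal_of_summable_norm he hb).of_norm.hasSum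
  convert hC using 2 with N
  rw [negExpConv, sum_mul]
  refine sum_congr rfl fun x hx => ?_
  rw [← mem_antidiagonal.mp hx, neg_pow, pow_add]
  ring

theorem stmt15 (w : ℂ) :
    ∑' n : ℕ, (-w) ^ n / n.factorial * (∑ j ∈ Finset.range n, 1 / (2 * (j + 1 : ℂ) - 1)) =
    -w * Complex.exp (-w) * twoF2 w := by
  set b : ℕ → ℂ := fun l => (pochThreeHalves l * (l + 1))⁻¹
  have hF := hasSum_negExpConv_mul_pow b w (summable_norm_inv_pochThreeHalves_mul_pow w)
  have hterm (n : ℕ) :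
      (-w) ^ (n + 1) / (n + 1)! * oddHarmonic (n + 1) = -w * (negExpConv b n * w ^ n) := by
    rw [negExpConv_inv_pochThreeHalves_mul_succ, neg_pow]
    ring
  calc ∑' n : ℕ, (-w) ^ n / n ! * oddHarmonic n
      = ∑' n : ℕ, -w * (negExpConv b n * w ^ n) := by
        rw [tsum_eq_zero_add' (by simpa only [hterm] using hF.summable.mul_left (-w))]
        simp only [hterm]
        simp [oddHarmonic]
    _ = -w * Complex.exp (-w) * twoF2 w := by
        rw [tsum_mul_left, hF.tsum_eq, twoF2_eq_tsum, mul_assoc]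
end

section
/- Let α > 0 and let n be a positive integer. Then ∫₀^∞ e^(−α²·t²/(4π)) / √(t² + 4π²·n²) dt = (1/2)·e^(π·α²·n²/2)·K₀(π·α²·n²/2). -/
open scoped Real
open MeasureTheory

theorem stmt17 (α : ℝ) (hα : 0 < α) (n : ℕ) (hn : 0 < n) :
    (∫ t in Set.Ioi (0 : ℝ),
        Real.exp (-α ^ 2 * t ^ 2 / (4 * π)) / Real.sqrt (t ^ 2 + 4 * π ^ 2 * n ^ 2)) =
    1 / 2 * Real.exp (π * α ^ 2 * n ^ 2 / 2) * besselK0 (π * α ^ 2 * n ^ 2 / 2) := by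
  have hπ := Real.pi_pos
  have hnp : (0:ℝ) < n := Nat.cast_pos.mpr hn
  set b : ℝ := 2 * π * n with hb
  have hbpos : 0 < b := by positivity
  set c : ℝ := π * α ^ 2 * n ^ 2 / 2 with hc
  -- image of Ioi 0 under u ↦ b * sinh u is Ioi 0
  have himg : (fun u : ℝ => b * Real.sinh u) '' Set.Ioi 0 = Set.Ioi 0 := by
    ext t
    constructor
    · rintro ⟨u, hu, rfl⟩
      exact mul_pos hbpos (Real.sinh_pos_iff.mpr hu)
    · intro ht
      refine ⟨Real.arsinh (t / b), ?_, ?_⟩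
      · exact Real.arsinh_pos_iff.mpr (div_pos ht hbpos)
      · show b * Real.sinh (Real.arsinh (t / b)) = t
        rw [Real.sinh_arsinh, mul_div_cancel₀ _ hbpos.ne']
  have hder : ∀ u ∈ Set.Ioi (0:ℝ), HasDerivWithinAt (fun u : ℝ => b * Real.sinh u)
      (b * Real.cosh u) (Set.Ioi 0) u := fun u _ =>
    ((Real.hasDerivAt_sinh u).const_mul b).hasDerivWithinAt
  have hinj : Set.InjOn (fun u : ℝ => b * Real.sinh u) (Set.Ioi 0) :=
    fun x _ y _ h => Real.sinh_injective (mul_left_cancel₀ hbpos.ne' h)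
  have key := integral_image_eq_integral_abs_deriv_smul measurableSet_Ioi hder hinj
    (fun t => Real.exp (-α ^ 2 * t ^ 2 / (4 * π)) / Real.sqrt (t ^ 2 + 4 * π ^ 2 * n ^ 2))
  rw [himg] at key
  rw [key]
  have hintg : ∀ u ∈ Set.Ioi (0:ℝ),
      |b * Real.cosh u| • (Real.exp (-α ^ 2 * (b * Real.sinh u) ^ 2 / (4 * π)) /
        Real.sqrt ((b * Real.sinh u) ^ 2 + 4 * π ^ 2 * n ^ 2)) =
      Real.exp c * Real.exp (-c * Real.cosh (2 * u)) := by
    intro u _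
    have hch : 0 < Real.cosh u := Real.cosh_pos u
    have hsq : (b * Real.sinh u) ^ 2 + 4 * π ^ 2 * n ^ 2 = (b * Real.cosh u) ^ 2 := by
      have : Real.cosh u ^ 2 = Real.sinh u ^ 2 + 1 := Real.cosh_sq u
      rw [hb]; linear_combination (-(2 * π * (n:ℝ)) ^ 2) * this
    rw [hsq, Real.sqrt_sq (by positivity), smul_eq_mul,
      abs_of_pos (by positivity : (0:ℝ) < b * Real.cosh u)]
    rw [mul_comm, div_mul_cancel₀ _ (by positivity : (b * Real.cosh u) ≠ 0), ← Real.exp_add]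
    congr 1
    have h2 : Real.cosh (2 * u) = 2 * Real.sinh u ^ 2 + 1 := by
      rw [Real.cosh_two_mul]
      nlinarith [Real.cosh_sq u]
    rw [h2, hb, hc]
    field_simp
    ring
  rw [setIntegral_congr_fun measurableSet_Ioi hintg, integral_const_mul]
  have := integral_comp_mul_left_Ioi (fun v => Real.exp (-c * Real.cosh v)) 0
    (by norm_num : (0:ℝ) < 2)
  simp only [mul_zero] at this
  rw [this, besselK0, smul_eq_mul]
  ring
end
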